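/- arXiv:2010.11116 — 2 statements merged into one kernel-verified Lean document; each statement's English description precedes it below -/
import Mathlib

section
/- If a binary string s of length N is a Dyck path, then every prefix of s of length i < N has strictly more 1s than 0s, while every suffix of s of length j < N has at least as many 0s as 1s. Consequently, given a composition from M(s) that is not the full-length composition, one can decide whether it arises from a prefix or from a suffix by comparing its number of 1s and 0s. -/
open Finset

/-! A suffix of length j is the complement of the prefix of length N - j. That prefix carries at
least ⌊(N - j)/2⌋ + 1 of the N/2 ones, so the suffix carries at most ⌊j/2⌋ of them, while every
proper prefix is ones-heavy. Hence the two kinds of proper compositions in M(s) are separated by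
the comparison of their coordinates. -/

def wtB {m : ℕ} (s : Fin m → Bool) : ℕ := ∑ i, if s i then 1 else 0

def onesPref {n : ℕ} (s : Fin n → Bool) (i : ℕ) : ℕ :=
  ∑ j ∈ Finset.univ.filter (fun j : Fin n => (j : ℕ) < i), if s j then 1 else 0

def onesSuff {n : ℕ} (s : Fin n → Bool) (i : ℕ) : ℕ :=
  ∑ j ∈ Finset.univ.filter (fun j : Fin n => n - i ≤ (j : ℕ)), if s j then 1 else 0

/-- Prefix composition multiset: compositions (number of 0s, number of 1s) of all
prefixes of lengths 1,...,n. -/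
def Mp {n : ℕ} (s : Fin n → Bool) : Multiset (ℕ × ℕ) :=
  (Multiset.range n).map (fun i => (i + 1 - onesPref s (i + 1), onesPref s (i + 1)))

/-- Suffix composition multiset. -/
def Msf {n : ℕ} (s : Fin n → Bool) : Multiset (ℕ × ℕ) :=
  (Multiset.range n).map (fun i => (i + 1 - onesSuff s (i + 1), onesSuff s (i + 1)))

/-- Prefix-suffix composition multiset M(s). -/
def Mps {n : ℕ} (s : Fin n → Bool) : Multiset (ℕ × ℕ) := Mp s + Msf s

def IsDyck {N : ℕ} (s : Fin N → Bool) : Prop :=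
  onesPref s N = N / 2 ∧ ∀ i : ℕ, 1 ≤ i → i ≤ N - 1 → i / 2 + 1 ≤ onesPref s i

section Counting

variable {n : ℕ} (s : Fin n → Bool)

lemma sum_ite_le_card {α : Type*} (S : Finset α) (p : α → Bool) :
    ∑ j ∈ S, (if p j then 1 else 0) ≤ #S := by
  rw [sum_boole]
  exact card_filter_le S _

lemma onesPref_le (i : ℕ) : onesPref s i ≤ i :=
  (sum_ite_le_card _ s).trans (Fin.card_filter_val_lt.trans_le (min_le_right n i))

lemma onesPref_add_onesSuff (j : ℕ) : onesPref s (n - j) + onesSuff s j = onesPref s n := by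
  have hall : univ.filter (fun k : Fin n => (k : ℕ) < n) = univ := filter_true_of_mem (by simp)
  rw [onesPref, onesPref, onesSuff, hall,
    ← sum_filter_add_sum_filter_not univ (fun k : Fin n => (k : ℕ) < n - j)]
  simp only [not_lt]

lemma onesSuff_le (j : ℕ) : onesSuff s j ≤ j := by
  have hcard := card_filter_add_card_filter_not (s := univ) (fun k : Fin n => (k : ℕ) < n - j)
  rw [Fin.card_filter_val_lt, card_univ, Fintype.card_fin] at hcard
  simp only [not_lt] at hcard
  have := sum_ite_le_card (univ.filter fun k : Fin n => n - j ≤ (k : ℕ)) s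
  rw [← onesSuff] at this
  omega

end Counting

namespace IsDyck

variable {N : ℕ} {s : Fin N → Bool}

lemma lt_two_mul_onesPref (hs : IsDyck s) {i : ℕ} (hi : 1 ≤ i) (hiN : i < N) :
    i < 2 * onesPref s i := by
  have := hs.2 i hi (by omega)
  omega

lemma two_mul_onesSuff_le (hs : IsDyck s) {j : ℕ} (hj : 1 ≤ j) (hjN : j < N) :
    2 * onesSuff s j ≤ j := by
  have hpref := hs.2 (N - j) (by omega) (by omega)
  have hsplit := onesPref_add_onesSuff s j
  have htotal := hs.1
  omega

lemma lt_of_mem_Mp (hs : IsDyck s) {p : ℕ × ℕ} (hp : p ∈ Mp s) (hpN : p.1 + p.2 < N) :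
    p.1 < p.2 := by
  obtain ⟨i, -, rfl⟩ := Multiset.mem_map.mp hp
  dsimp only at hpN ⊢
  have hle := onesPref_le s (i + 1)
  have := hs.lt_two_mul_onesPref (i := i + 1) (by omega) (by omega)
  omega

lemma le_of_mem_Msf (hs : IsDyck s) {p : ℕ × ℕ} (hp : p ∈ Msf s) (hpN : p.1 + p.2 < N) :
    p.2 ≤ p.1 := by
  obtain ⟨i, -, rfl⟩ := Multiset.mem_map.mp hp
  dsimp only at hpN ⊢
  have hle := onesSuff_le s (i + 1)
  have := hs.two_mul_onesSuff_le (j := i + 1) (by omega) (by omega)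
  omega

end IsDyck

theorem stmt5_general (N : ℕ) (s : Fin N → Bool) (hs : IsDyck s) :
    (∀ i : ℕ, 1 ≤ i → i < N → i - onesPref s i < onesPref s i) ∧
    (∀ j : ℕ, 1 ≤ j → j < N → onesSuff s j ≤ j - onesSuff s j) ∧
    (∀ p : ℕ × ℕ, p ∈ Mps s → p.1 + p.2 < N →
      (p.1 < p.2 → p ∈ Mp s) ∧ (p.2 ≤ p.1 → p ∈ Msf s)) := by
  refine ⟨fun i hi hiN => ?_, fun j hj hjN => ?_, fun p hp hpN => ?_⟩
  · have := hs.lt_two_mul_onesPref hi hiN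
    omega
  · have := hs.two_mul_onesSuff_le hj hjN
    omega
  · rcases Multiset.mem_add.mp hp with hpref | hsuff
    · exact ⟨fun _ => hpref, fun hle => absurd (hs.lt_of_mem_Mp hpref hpN) (not_lt.2 hle)⟩
    · exact ⟨fun hlt => absurd (hs.le_of_mem_Msf hsuff hpN) (not_le.2 hlt), fun _ => hsuff⟩

/-- for a Dyck path, every proper prefix has strictly more 1s than 0s,
every proper suffix has at least as many 0s as 1s, and hence any non-full-length
composition in M(s) can be attributed to a prefix or a suffix by comparing counts. -/
theorem stmt5 (N : ℕ) (hN : Even N) (s : Fin N → Bool) (hs : IsDyck s) :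
    (∀ i : ℕ, 1 ≤ i → i < N → i - onesPref s i < onesPref s i) ∧
    (∀ j : ℕ, 1 ≤ j → j < N → onesSuff s j ≤ j - onesSuff s j) ∧
    (∀ p : ℕ × ℕ, p ∈ Mps s → p.1 + p.2 < N →
      (p.1 < p.2 → p ∈ Mp s) ∧ (p.2 ≤ p.1 → p ∈ Msf s)) :=
  stmt5_general N s hs
end

section
/- Let v ∈ {0,1}^m be a binary string with R(v)_i > 0 for all i ∈ [m] and with R(v)_m ≤ 5√n + 1, where m = n + (7/2)√n + 1. Let N = n + (17/2)√n + 2 be even and w = wt(v). Then the string s = v 1^{N/2 − w} 0^{N/2 − (m − w)} has length N, weight N/2, and satisfies wt(s_1...s_i) ≥ floor(i/2) + 1 for all i ∈ [N−1]; i.e., s is a Dyck path. -/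
/-!
On its first `m` letters `s` is `v`, whose prefixes all have `R > 0`. Taking `i = m` gives
`m ≤ 2 wt(v)`, so along the block of ones that follows, the prefix weight `wt(v) + (i - m)` stays
above `i / 2`. After that block the prefix weight is frozen at `N / 2`, which exceeds `⌊i / 2⌋` for every
`i ≤ N - 1` because `N` is even.
-/

open Finset

def RDSat {m : ℕ} (x : Fin m → Bool) (i : ℕ) : ℤ :=
  2 * (∑ j ∈ Finset.univ.filter (fun j : Fin m => (j : ℕ) < i), if x j then (1 : ℤ) else 0) - i

section onesPref

variable {n : ℕ} (s : Fin n → Bool)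

lemma onesPref_zero : onesPref s 0 = 0 := by
  simp [onesPref]

lemma onesPref_succ (i : ℕ) (h : i < n) :
    onesPref s (i + 1) = onesPref s i + if s ⟨i, h⟩ then 1 else 0 := by
  have hset : univ.filter (fun j : Fin n => (j : ℕ) < i + 1)
      = insert ⟨i, h⟩ (univ.filter (fun j : Fin n => (j : ℕ) < i)) := by
    ext j
    simp only [mem_filter, mem_insert, mem_univ, true_and, Nat.lt_succ_iff_lt_or_eq, Fin.ext_iff]
    tauto
  rw [onesPref, hset, sum_insert (by simp), add_comm]
  rfl

lemma onesPref_of_le {i : ℕ} (h : n ≤ i) : onesPref s i = wtB s := by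
  unfold onesPref wtB
  congr 1
  exact filter_true_of_mem fun j _ => j.isLt.trans_le h

lemma wtB_le : wtB s ≤ n := by
  calc wtB s ≤ ∑ _i : Fin n, 1 := sum_le_sum fun i _ => by split <;> omega
    _ = n := by simp

lemma RDSat_eq (i : ℕ) : RDSat s i = 2 * (onesPref s i : ℤ) - i := by
  simp only [RDSat, onesPref, Nat.cast_sum, Nat.cast_ite, Nat.cast_one, Nat.cast_zero]

lemma RDSat_pos_iff (i : ℕ) : 0 < RDSat s i ↔ i / 2 + 1 ≤ onesPref s i := by
  rw [RDSat_eq]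
  omega

lemma onesPref_eq_of_agree {m : ℕ} (v : Fin m → Bool)
    (hsv : ∀ (i : Fin n) (j : Fin m), (i : ℕ) = (j : ℕ) → s i = v j) :
    ∀ i, i ≤ m → i ≤ n → onesPref s i = onesPref v i
  | 0, _, _ => by rw [onesPref_zero, onesPref_zero]
  | i + 1, him, hin => by
    rw [onesPref_succ s i hin, onesPref_succ v i him,
      onesPref_eq_of_agree v hsv i (by omega) (by omega), hsv ⟨i, hin⟩ ⟨i, him⟩ rfl]

lemma onesPref_of_forall_true {a b : ℕ} (hb : b ≤ n)
    (hs : ∀ j : Fin n, a ≤ (j : ℕ) → (j : ℕ) < b → s j = true) :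
    ∀ i, a ≤ i → i ≤ b → onesPref s i = onesPref s a + (i - a)
  | 0, hai, _ => by obtain rfl := Nat.le_zero.mp hai; rfl
  | i + 1, hai, hib => by
    rcases hai.eq_or_lt with rfl | hai
    · simp
    rw [onesPref_succ s i (by omega), onesPref_of_forall_true hb hs i (by omega) (by omega),
      hs ⟨i, by omega⟩ (by simp; omega) (by simp; omega)]
    simp only [if_true]
    omega

lemma onesPref_of_forall_false {a : ℕ} (hs : ∀ j : Fin n, a ≤ (j : ℕ) → s j = false) :
    ∀ i, a ≤ i → i ≤ n → onesPref s i = onesPref s a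
  | 0, hai, _ => by rw [Nat.le_zero.mp hai]
  | i + 1, hai, hin => by
    rcases hai.eq_or_lt with rfl | hai
    · rfl
    rw [onesPref_succ s i hin, onesPref_of_forall_false hs i (by omega) (by omega),
      hs ⟨i, hin⟩ (by simp; omega)]
    rfl

end onesPref

theorem stmt9_general (m N : ℕ)
    (hNe : Even N)
    (v : Fin m → Bool)
    (hpos : ∀ i : ℕ, 1 ≤ i → i ≤ m → 0 < RDSat v i)
    (w : ℕ) (hw : w = wtB v) (hw1 : w ≤ N / 2) (hw2 : m - w ≤ N / 2)
    (s : Fin N → Bool)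
    (hs1 : ∀ (i : Fin N) (j : Fin m), (i : ℕ) = (j : ℕ) → s i = v j)
    (hs2 : ∀ i : Fin N, m ≤ (i : ℕ) → (i : ℕ) < m + (N / 2 - w) → s i = true)
    (hs3 : ∀ i : Fin N, m + (N / 2 - w) ≤ (i : ℕ) → s i = false) :
    wtB s = N / 2 ∧ ∀ i : ℕ, 1 ≤ i → i ≤ N - 1 → i / 2 + 1 ≤ onesPref s i := by
  have hN2 : N / 2 + N / 2 = N := by obtain ⟨t, ht⟩ := hNe; omega
  have hwm : w ≤ m := hw ▸ wtB_le v
  have hbal : m ≤ 2 * w := by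
    rcases Nat.eq_zero_or_pos m with h0 | h0
    · omega
    · have := hpos m h0 le_rfl
      rw [RDSat_eq, onesPref_of_le v le_rfl, ← hw] at this
      omega
  have hprefix (i : ℕ) (hi : i ≤ m) : onesPref s i = onesPref v i :=
    onesPref_eq_of_agree s v hs1 i hi (by omega)
  have hones (i : ℕ) (h1 : m ≤ i) (h2 : i ≤ m + (N / 2 - w)) : onesPref s i = w + (i - m) := by
    rw [onesPref_of_forall_true s (by omega) hs2 i h1 h2, hprefix m le_rfl,
      onesPref_of_le v le_rfl, hw]
  have hzeros (i : ℕ) (h1 : m + (N / 2 - w) ≤ i) (h2 : i ≤ N) : onesPref s i = N / 2 := by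
    rw [onesPref_of_forall_false s hs3 i h1 h2, hones _ (by omega) le_rfl]
    omega
  refine ⟨by rw [← onesPref_of_le s le_rfl, hzeros N (by omega) le_rfl], fun i hi1 hi2 => ?_⟩
  rcases le_or_gt i m with him | hmi
  · rw [hprefix i him, ← RDSat_pos_iff]
    exact hpos i hi1 him
  rcases le_or_gt i (m + (N / 2 - w)) with hi | hi
  · rw [hones i hmi.le hi]
    omega
  · rw [hzeros i hi.le (by omega)]
    omega

/-- padding v (which has strictly positive running digital sums and
R(v)_m ≤ 5√n+1) with 1^{N/2 − w} 0^{N/2 − (m − w)} yields a Dyck path of length N. -/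
theorem stmt9 (k : ℕ) (hk : 0 < k) (hke : Even k) (m N : ℕ)
    (hm : m = k * k + 7 * k / 2 + 1) (hN : N = k * k + 17 * k / 2 + 2) (hNe : Even N)
    (v : Fin m → Bool)
    (hpos : ∀ i : ℕ, 1 ≤ i → i ≤ m → 0 < RDSat v i)
    (hend : RDSat v m ≤ 5 * (k : ℤ) + 1)
    (w : ℕ) (hw : w = wtB v) (hw1 : w ≤ N / 2) (hw2 : m - w ≤ N / 2)
    (s : Fin N → Bool)
    (hs1 : ∀ (i : Fin N) (j : Fin m), (i : ℕ) = (j : ℕ) → s i = v j)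
    (hs2 : ∀ i : Fin N, m ≤ (i : ℕ) → (i : ℕ) < m + (N / 2 - w) → s i = true)
    (hs3 : ∀ i : Fin N, m + (N / 2 - w) ≤ (i : ℕ) → s i = false) :
    wtB s = N / 2 ∧ ∀ i : ℕ, 1 ≤ i → i ≤ N - 1 → i / 2 + 1 ≤ onesPref s i :=
  stmt9_general m N hNe v hpos w hw hw1 hw2 s hs1 hs2 hs3
end
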